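/- arXiv:2203.13747 — 4 statements merged into one kernel-verified Lean document; each statement's English description precedes it below -/
import Mathlib

section
/- Let F be a finite field with |F| > 3 and let K be a field equipped with an embedding of F into K. Regard SL₂(F) and GL₂(F) as subgroups of GL₂(K) via entrywise application of the embedding, and let Z denote the subgroup of nonzero scalar matrices in GL₂(K). Let G be a subgroup of GL₂(K) with SL₂(F) ⊆ G ⊆ Z·GL₂(F), and let N be a normal subgroup of G that is not contained in Z. Then SL₂(F) ⊆ N. -/
/-!
Let `Q ≤ SL₂(F)` be the preimage of `N`; it is normal because `SL₂(F) ≤ G`. If `Q` were central,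
write a non-scalar `n ∈ N` as `z·A` with `z` scalar and `A ∈ GL₂(F)`: for every transvection `t`,
the commutator `[A, t]` maps to `[n, t] ∈ N`, so it is central in `SL₂(F)`, which forces it to be
trivial. Then `A` commutes with both elementary transvections, so `A`, hence `n`, is scalar.
So `Q` is not central, and as `PSL₂(F)` is simple and `SL₂(F)` perfect for `|F| > 3`, `Q = SL₂(F)`.
-/

open Matrix Subgroup
open scoped MatrixGroups commutatorElement

theorem commutatorElement_mul_left_of_mem_center {G : Type*} [Group G] {z : G}
    (hz : z ∈ center G) (a g : G) : ⁅z * a, g⁆ = ⁅a, g⁆ := by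
  rw [commutatorElement_mul_left_eq_conj_mul, (mem_center_iff.mp hz _).symm,
    commutatorElement_eq_one_iff_mul_comm.mpr (mem_center_iff.mp hz g).symm]
  group

theorem FiniteField.exists_ne_zero_sq_ne_one {F : Type*} [Field F] [Fintype F]
    (hF : 3 < Fintype.card F) : ∃ a : F, a ≠ 0 ∧ a ^ 2 ≠ 1 := by
  classical
  obtain ⟨a, -, ha⟩ := Finset.exists_mem_notMem_of_card_lt_card
    (s := ({0, 1, -1} : Finset F)) (t := Finset.univ)
    (by rw [Finset.card_univ]; exact Finset.card_le_three.trans_lt hF)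
  simp only [Finset.mem_insert, Finset.mem_singleton, not_or] at ha
  exact ⟨a, ha.1, by simp [sq_eq_one_iff, ha.2.1, ha.2.2]⟩

namespace Matrix

theorem SpecialLinearGroup.exists_toGL_eq_commutatorElement {n R : Type*} [Fintype n]
    [DecidableEq n] [CommRing R] (A B : GL n R) :
    ∃ s : SpecialLinearGroup n R, toGL s = ⁅A, B⁆ := by
  have h : GeneralLinearGroup.det ⁅A, B⁆ = 1 := by
    rw [map_commutatorElement, commutatorElement_eq_one_iff_mul_comm, mul_comm]
  exact ⟨⟨((⁅A, B⁆ : GL n R) : Matrix n n R), congrArg Units.val h⟩, Units.ext rfl⟩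

theorem GeneralLinearGroup.range_unitsMap_algebraMap_eq_center {n R : Type*} [Fintype n]
    [DecidableEq n] [CommRing R] :
    (Units.map (algebraMap R (Matrix n n R)).toMonoidHom).range = center (GL n R) := by
  rw [GeneralLinearGroup.center_eq_range_scalar]
  rfl

/-- Simplicity of `PSL(2, F)` only gives `Q ⊔ Z = ⊤`; perfectness of `SL(2, F)` upgrades this
to `Q = ⊤`, because `SL(2, F) ⧸ Q` is then a quotient of the abelian group `Z`. -/
theorem SL2.eq_top_of_not_le_center {F : Type*} [Field F] [Fintype F]
    (hF : 3 < Fintype.card F) (Q : Subgroup SL(2, F)) [Q.Normal]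
    (hQ : ¬ Q ≤ center SL(2, F)) : Q = ⊤ := by
  obtain ⟨a, ha, ha2⟩ := FiniteField.exists_ne_zero_sq_ne_one hF
  have : IsSimpleGroup PSL(2, F) :=
    ProjectiveSpecialLinearGroup.rank_two_simple (by rw [Nat.card_eq_fintype_card]; omega)
  let π := QuotientGroup.mk' (center SL(2, F))
  have hQπ : Q.map π = ⊤ := by
    refine ((‹Q.Normal›.map π (QuotientGroup.mk'_surjective _)).eq_bot_or_eq_top).resolve_left ?_
    rwa [Subgroup.map_eq_bot_iff, QuotientGroup.ker_mk']
  have hQZ : Q ⊔ center SL(2, F) = ⊤ := by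
    rw [← QuotientGroup.ker_mk' (center SL(2, F)), ← comap_map_eq, hQπ, comap_top]
  rw [eq_top_iff, ← SL2.commutator_eq_top ha ha2]
  exact Normal.commutator_le_of_self_sup_commutative_eq_top hQZ inferInstance

namespace GeneralLinearGroup

variable {F : Type*} [Field F]

/-- If `A T A⁻¹ T⁻¹ = r` is scalar, comparing traces and determinants of `A T A⁻¹ = r T`
gives `2 r = 2` and `r ^ 2 = 1`, hence `(r - 1) ^ 2 = 0`, in every characteristic. -/
theorem commute_of_commutatorElement_mem_center {A T : GL (Fin 2) F}
    (hT : trace (T : Matrix (Fin 2) (Fin 2) F) = 2) (h : ⁅A, T⁆ ∈ center (GL (Fin 2) F)) :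
    Commute A T := by
  rw [center_eq_range_scalar] at h
  obtain ⟨r, hr⟩ := h
  have hconj : A * T * A⁻¹ = scalar (Fin 2) r * T := by
    rw [hr, commutatorElement_def]; group
  have hconj' : A.val * T.val * A⁻¹.val = (r : F) • T.val := by
    rw [← Units.val_mul, ← Units.val_mul, hconj, Units.val_mul, coe_scalar, smul_eq_diagonal_mul]
    rfl
  have htr : (r : F) * 2 = 2 := by
    have := congrArg trace hconj'
    rwa [trace_units_conj, trace_smul, hT, smul_eq_mul, eq_comm] at this
  have hdet : (r : F) ^ 2 = 1 := by
    have := congrArg Matrix.det hconj'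
    rw [det_units_conj, det_smul, Fintype.card_fin] at this
    exact (mul_eq_right₀ (det_ne_zero T)).mp this.symm
  have hr1 : r = 1 := by
    ext
    have : ((r : F) - 1) ^ 2 = 0 := by linear_combination hdet - htr
    simpa [sub_eq_zero] using this
  rw [← commutatorElement_eq_one_iff_commute, ← hr, hr1, map_one]

theorem mem_center_of_commutatorElement_transvection_mem_center {A : GL (Fin 2) F}
    (h : ∀ i j : Fin 2, (hij : i ≠ j) →
      ⁅A, SpecialLinearGroup.toGL (SpecialLinearGroup.transvection hij 1)⁆ ∈
        center (GL (Fin 2) F)) :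
    A ∈ center (GL (Fin 2) F) := by
  refine mem_center_iff_val_mem_range_scalar.mpr
    (mem_range_scalar_of_commute_single fun i j hij => ?_)
  have hT : trace (SpecialLinearGroup.transvection hij (1 : F) : Matrix (Fin 2) (Fin 2) F) = 2 :=
    by simp [SpecialLinearGroup.transvection_coe, hij]
  have hcomm := Commute.units_val_iff.mpr (commute_of_commutatorElement_mem_center hT (h i j hij))
  rw [SpecialLinearGroup.coe_GL_coe_matrix, SpecialLinearGroup.transvection_coe] at hcomm
  simpa using hcomm.symm.sub_left (Commute.one_left _)

end GeneralLinearGroup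

end Matrix

/-- Let `F` be a finite field with more than `3` elements and `K` a field with an
embedding `f : F → K`.  View `SL₂(F)` and `GL₂(F)` as subgroups of `GL₂(K)` via
entrywise application of `f`, and let `Z ≤ GL₂(K)` be the subgroup of nonzero scalar
matrices.  If `G` is a subgroup of `GL₂(K)` with `SL₂(F) ⊆ G ⊆ Z·GL₂(F)`, and `N` is a
normal subgroup of `G` not contained in `Z`, then `SL₂(F) ⊆ N`. -/
theorem stmt2 {F K : Type*} [Field F] [Fintype F] [Field K]
    (hF : 3 < Fintype.card F) (f : F →+* K)
    (SLF GLF Z : Subgroup (GL (Fin 2) K))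
    (hSLF : SLF = (Matrix.SpecialLinearGroup.toGL.comp
      (Matrix.SpecialLinearGroup.map (n := Fin 2) f)).range)
    (hGLF : GLF = (Units.map
      (f.mapMatrix : Matrix (Fin 2) (Fin 2) F →+* Matrix (Fin 2) (Fin 2) K).toMonoidHom).range)
    (hZ : Z = (Units.map
      (algebraMap K (Matrix (Fin 2) (Fin 2) K)).toMonoidHom).range)
    (G N : Subgroup (GL (Fin 2) K))
    (hSG : SLF ≤ G)
    (hGZ : ∀ g ∈ G, ∃ z ∈ Z, ∃ a ∈ GLF, g = z * a)
    (hNG : N ≤ G)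
    (hNnormal : ∀ g ∈ G, ∀ x ∈ N, g * x * g⁻¹ ∈ N)
    (hNZ : ¬ N ≤ Z) :
    SLF ≤ N := by
  rw [GeneralLinearGroup.range_unitsMap_algebraMap_eq_center] at hZ
  subst hSLF hGLF hZ
  set ι := SpecialLinearGroup.toGL.comp (SpecialLinearGroup.map (n := Fin 2) f)
  have hι (s : SL(2, F)) : ι s = GeneralLinearGroup.map f (SpecialLinearGroup.toGL s) :=
    Units.ext rfl
  have hιG (s : SL(2, F)) : ι s ∈ G := hSG ⟨s, rfl⟩
  let Q := N.comap ι
  have : Q.Normal := ⟨fun q hq s => by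
    rw [mem_comap, map_mul, map_mul, map_inv]; exact hNnormal _ (hιG s) _ hq⟩
  suffices Q = ⊤ by rintro _ ⟨s, rfl⟩; exact this.ge (mem_top s)
  refine SL2.eq_top_of_not_le_center hF Q fun hQ => hNZ fun n hn => ?_
  obtain ⟨z, hz, _, ⟨A, rfl⟩, rfl⟩ := hGZ n (hNG hn)
  refine mul_mem hz (GeneralLinearGroup.map_center_le f
    (GeneralLinearGroup.mem_center_of_commutatorElement_transvection_mem_center fun i j hij => ?_))
  set t := SpecialLinearGroup.transvection hij (1 : F)
  obtain ⟨c, hc⟩ := SpecialLinearGroup.exists_toGL_eq_commutatorElement A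
    (SpecialLinearGroup.toGL t)
  rw [← hc, SpecialLinearGroup.toGL_mem_center_iff]
  refine hQ ?_
  have hιc : ι c = ⁅z * GeneralLinearGroup.map f A, ι t⁆ := by
    rw [commutatorElement_mul_left_of_mem_center hz, hι, hι, ← map_commutatorElement, hc]
  rw [mem_comap, hιc, ← commutatorElement_inv]
  exact inv_mem (mul_mem (hNnormal _ (hιG _) _ hn) (inv_mem hn))
end

section
/- Let p be a prime and q > 3 a power of p, let I be a nonempty finite set with a distinguished element i₀, let D be a subgroup of F_qˣ, and let H(F_q) := {(M_i)_{i∈I} ∈ ∏_{i∈I} GL₂(F_q) : there exists δ ∈ D with det M_i = δ for all i ∈ I}. Let L be a field of characteristic p together with an embedding ι : F_q ↪ L. Then for every group homomorphism χ : H(F_q) → Lˣ there exists a natural number k such that χ((M_i)_{i∈I}) = ι(det M_{i₀})^k for all (M_i)_{i∈I} ∈ H(F_q). -/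
/-- For a field `F` and a subgroup `D ≤ Fˣ`, the subgroup
`H(F) = {(M i)_{i ∈ I} ∈ ∏_{i ∈ I} GL₂(F) : ∃ δ ∈ D, ∀ i, det (M i) = δ}`
of tuples of invertible `2 × 2` matrices with common determinant belonging to `D`. -/
def commonDetSubgroup (I : Type*) {F : Type*} [Field F] (D : Subgroup Fˣ) :
    Subgroup (∀ _ : I, GL (Fin 2) F) where
  carrier := {M | ∃ δ ∈ D, ∀ i, Matrix.GeneralLinearGroup.det (M i) = δ}
  one_mem' := ⟨1, D.one_mem, fun _ => map_one _⟩
  mul_mem' := by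
    rintro a b ⟨δ, hδ, ha⟩ ⟨ε, hε, hb⟩
    exact ⟨δ * ε, D.mul_mem hδ hε, fun i => by
      simp only [Pi.mul_apply, map_mul, ha i, hb i]⟩
  inv_mem' := by
    rintro a ⟨δ, hδ, ha⟩
    exact ⟨δ⁻¹, D.inv_mem hδ, fun i => by
      simp only [Pi.inv_apply, map_inv, ha i]⟩

/-! Unipotent matrices have order `p` in characteristic `p`, and a reduced ring of characteristic
`p` has no nontrivial `p`-th roots of unity, so every character of `SL₂(F)^I` with values in `Lˣ`
is trivial: every element of `SL₂(F)` is a product lower · upper · lower · upper of unipotents,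
and as this pattern has fixed length it applies componentwise in `SL₂(F)^I`.
Hence `χ` factors through the common determinant `H(F) → D`. Since `D` is finite cyclic and `ι`
embeds it in `Lˣ`, a generator of `D` becomes a primitive root of unity, and every character of
`D` is a power of `ι`. -/

open scoped MatrixGroups

theorem MonoidHom.apply_eq_one_of_pow_expChar_eq_one {G R : Type*} [Monoid G] [CommRing R]
    [IsReduced R] {p : ℕ} [ExpChar R p] (χ : G →* Rˣ) {g : G} (hg : g ^ p = 1) : χ g = 1 := by
  have h : (χ g : R) ^ (p ^ 1 * 1) = 1 := by
    rw [pow_one, mul_one, ← Units.val_pow_eq_pow_val, ← map_pow, hg, map_one, Units.val_one]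
  rw [ExpChar.pow_prime_pow_mul_eq_one_iff, pow_one] at h
  exact Units.ext h

namespace Matrix.SpecialLinearGroup

section Unipotent

variable {R : Type*} [CommRing R]

def upperUnipotent (c : R) : SL(2, R) := ⟨!![1, c; 0, 1], by simp [det_fin_two_of]⟩

def lowerUnipotent (c : R) : SL(2, R) := ⟨!![1, 0; c, 1], by simp [det_fin_two_of]⟩

@[simp]
theorem coe_upperUnipotent (c : R) :
    (upperUnipotent c : Matrix (Fin 2) (Fin 2) R) = !![1, c; 0, 1] :=
  rfl

@[simp]
theorem coe_lowerUnipotent (c : R) :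
    (lowerUnipotent c : Matrix (Fin 2) (Fin 2) R) = !![1, 0; c, 1] :=
  rfl

@[simp]
theorem upperUnipotent_zero : upperUnipotent (0 : R) = 1 := by
  ext : 1; simp [one_fin_two]

@[simp]
theorem lowerUnipotent_zero : lowerUnipotent (0 : R) = 1 := by
  ext : 1; simp [one_fin_two]

theorem upperUnipotent_mul_upperUnipotent (a b : R) :
    upperUnipotent a * upperUnipotent b = upperUnipotent (a + b) := by
  ext : 1; simp [add_comm]

theorem lowerUnipotent_mul_lowerUnipotent (a b : R) :
    lowerUnipotent a * lowerUnipotent b = lowerUnipotent (a + b) := by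
  ext : 1; simp

theorem upperUnipotent_pow (a : R) (n : ℕ) : upperUnipotent a ^ n = upperUnipotent (n * a) := by
  induction n with
  | zero => simp
  | succ n ih => rw [pow_succ, ih, upperUnipotent_mul_upperUnipotent]; push_cast; ring_nf

theorem lowerUnipotent_pow (a : R) (n : ℕ) : lowerUnipotent a ^ n = lowerUnipotent (n * a) := by
  induction n with
  | zero => simp
  | succ n ih => rw [pow_succ, ih, lowerUnipotent_mul_lowerUnipotent]; push_cast; ring_nf

theorem upperUnipotent_pow_char (p : ℕ) [CharP R p] (a : R) : upperUnipotent a ^ p = 1 := by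
  rw [upperUnipotent_pow, CharP.cast_eq_zero, zero_mul, upperUnipotent_zero]

theorem lowerUnipotent_pow_char (p : ℕ) [CharP R p] (a : R) : lowerUnipotent a ^ p = 1 := by
  rw [lowerUnipotent_pow, CharP.cast_eq_zero, zero_mul, lowerUnipotent_zero]

end Unipotent

variable {F : Type*} [Field F]

theorem det_fin_two_eq_one (A : SL(2, F)) : A 0 0 * A 1 1 - A 0 1 * A 1 0 = 1 := by
  rw [← det_fin_two]; exact A.det_coe

theorem eq_upperUnipotent_mul_lowerUnipotent_mul_upperUnipotent (A : SL(2, F)) (h : A 1 0 ≠ 0) :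
    A = upperUnipotent ((A 0 0 - 1) / A 1 0) * lowerUnipotent (A 1 0) *
      upperUnipotent ((A 1 1 - 1) / A 1 0) := by
  have hdet := det_fin_two_eq_one A
  ext i j
  fin_cases i <;> fin_cases j <;> simp <;> field_simp <;> grind

theorem exists_eq_lowerUnipotent_mul_upperUnipotent_mul_lowerUnipotent_mul_upperUnipotent
    (A : SL(2, F)) :
    ∃ x y z w : F, A = lowerUnipotent x * upperUnipotent y * lowerUnipotent z * upperUnipotent w := by
  obtain ⟨x, hx⟩ : ∃ x : F, x * A 0 0 + A 1 0 ≠ 0 := by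
    by_cases h : A 1 0 = 0
    · refine ⟨1, ?_⟩
      have hdet := det_fin_two_eq_one A
      rw [h, mul_zero, sub_zero] at hdet
      simpa [h] using left_ne_zero_of_mul_eq_one hdet
    · exact ⟨0, by simpa using h⟩
  set B := lowerUnipotent x * A
  have hB : B 1 0 ≠ 0 := by simpa [B, mul_apply, Fin.sum_univ_two] using hx
  refine ⟨-x, (B 0 0 - 1) / B 1 0, B 1 0, (B 1 1 - 1) / B 1 0, ?_⟩
  calc A = lowerUnipotent (-x) * B := by
        rw [← mul_assoc, lowerUnipotent_mul_lowerUnipotent, neg_add_cancel, lowerUnipotent_zero,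
          one_mul]
    _ = _ := by
        nth_rw 1 [eq_upperUnipotent_mul_lowerUnipotent_mul_upperUnipotent B hB]
        simp only [mul_assoc]

theorem pi_monoidHom_apply_eq_one {I F R : Type*} [Field F] [CommRing R] [IsReduced R] (p : ℕ)
    [CharP F p] [ExpChar R p] (χ : (I → SL(2, F)) →* Rˣ) (A : I → SL(2, F)) : χ A = 1 := by
  choose x y z w hA using fun i =>
    exists_eq_lowerUnipotent_mul_upperUnipotent_mul_lowerUnipotent_mul_upperUnipotent (A i)
  have hupper (c : I → F) : χ (fun i => upperUnipotent (c i)) = 1 :=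
    χ.apply_eq_one_of_pow_expChar_eq_one (funext fun i => upperUnipotent_pow_char p (c i))
  have hlower (c : I → F) : χ (fun i => lowerUnipotent (c i)) = 1 :=
    χ.apply_eq_one_of_pow_expChar_eq_one (funext fun i => lowerUnipotent_pow_char p (c i))
  have hA' : A = (fun i => lowerUnipotent (x i)) * (fun i => upperUnipotent (y i)) *
      (fun i => lowerUnipotent (z i)) * (fun i => upperUnipotent (w i)) := funext hA
  rw [hA', map_mul, map_mul, map_mul, hupper, hupper, hlower, hlower, one_mul, one_mul, one_mul]

end Matrix.SpecialLinearGroup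

theorem IsCyclic.exists_apply_eq_pow_of_injective {G R : Type*} [Group G] [IsCyclic G] [Finite G]
    [CommRing R] [IsDomain R] (θ ψ : G →* Rˣ) (hθ : Function.Injective θ) :
    ∃ k : ℕ, ∀ g, ψ g = θ g ^ k := by
  obtain ⟨g, hg⟩ := IsCyclic.exists_generator (α := G)
  have : NeZero (orderOf g) := ⟨(orderOf_pos g).ne'⟩
  have hprim : IsPrimitiveRoot (θ g) (orderOf g) := by
    simpa [orderOf_injective θ hθ g] using IsPrimitiveRoot.orderOf (θ g)
  obtain ⟨k, -, hk⟩ := hprim.eq_pow_of_mem_rootsOfUnity (ξ := ψ g)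
    (by rw [mem_rootsOfUnity, ← map_pow, pow_orderOf_eq_one, map_one])
  refine ⟨k, fun h => ?_⟩
  obtain ⟨m, rfl⟩ := hg h
  rw [map_zpow, map_zpow, ← hk, ← zpow_natCast, ← zpow_natCast (θ g ^ m), ← zpow_mul, ← zpow_mul,
    mul_comm]

namespace commonDetSubgroup

variable {F : Type*} [Field F] (I : Type*) (D : Subgroup Fˣ)

def ofSL : (I → SL(2, F)) →* commonDetSubgroup I D :=
  (Matrix.SpecialLinearGroup.toGL.compLeft I).codRestrict _ fun A =>
    ⟨1, D.one_mem, fun i => Matrix.SpecialLinearGroup.coeToGL_det (A i)⟩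

variable {I D}

def commonDet (i₀ : I) : commonDetSubgroup I D →* D :=
  (Matrix.GeneralLinearGroup.det.comp
    ((Pi.evalMonoidHom _ i₀).comp (commonDetSubgroup I D).subtype)).codRestrict D fun M => by
      obtain ⟨δ, hδ, hM⟩ := M.2
      simpa [hM i₀] using hδ

theorem commonDet_surjective (i₀ : I) : Function.Surjective (commonDet (D := D) i₀) := by
  intro δ
  obtain ⟨g, hg⟩ := Matrix.GeneralLinearGroup.det_surjective (n := Fin 2) (δ : Fˣ)
  exact ⟨⟨fun _ => g, δ, δ.2, fun _ => hg⟩, Subtype.ext hg⟩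

theorem ker_commonDet_le {L : Type*} [CommRing L] [IsReduced L] {p : ℕ} [CharP F p] [ExpChar L p]
    (i₀ : I) (χ : commonDetSubgroup I D →* Lˣ) : (commonDet i₀).ker ≤ χ.ker := by
  intro M hM
  obtain ⟨δ, -, hdet⟩ := M.2
  have hδ : δ = 1 := by simpa [commonDet, ← hdet i₀] using hM
  have hMSL : M = ofSL I D fun i => ⟨(M.1 i : Matrix (Fin 2) (Fin 2) F), by
      simpa [hδ, Units.ext_iff] using hdet i⟩ :=
    Subtype.ext (funext fun i => Units.ext rfl)
  rw [MonoidHom.mem_ker, hMSL]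
  exact Matrix.SpecialLinearGroup.pi_monoidHom_apply_eq_one p (χ.comp (ofSL I D)) _

end commonDetSubgroup

theorem stmt3_general {p : ℕ} (hp : p.Prime) {F : Type*} [Field F] [Fintype F] [CharP F p]
    {I : Type*} (i₀ : I) (D : Subgroup Fˣ)
    {L : Type*} [Field L] [CharP L p] (ι : F →+* L)
    (χ : commonDetSubgroup I D →* Lˣ) :
    ∃ k : ℕ, ∀ M : commonDetSubgroup I D,
      (χ M : L) =
        ι ((Matrix.GeneralLinearGroup.det ((M : ∀ _ : I, GL (Fin 2) F) i₀) : Fˣ) : F) ^ k := by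
  open commonDetSubgroup in
  have := ExpChar.prime (R := L) hp
  let ψ := (commonDet i₀).liftOfSurjective (commonDet_surjective i₀) ⟨χ, ker_commonDet_le i₀ χ⟩
  obtain ⟨k, hk⟩ := IsCyclic.exists_apply_eq_pow_of_injective
    ((Units.map ι.toMonoidHom).comp D.subtype) ψ
    ((Units.map_injective ι.injective).comp Subtype.val_injective)
  have hψ (M : commonDetSubgroup I D) : ψ (commonDet i₀ M) = χ M :=
    (commonDet i₀).liftOfRightInverse_comp_apply _ _ _ M
  refine ⟨k, fun M => ?_⟩
  rw [← hψ, hk]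
  rfl

/-- Let `p` be a prime, `F` a finite field of characteristic `p` with more than `3`
elements (i.e. of cardinality a power `q > 3` of `p`), `I` a finite set with a
distinguished element `i₀`, `D ≤ Fˣ` a subgroup, and
`H(F) = {(M i) ∈ ∏ GL₂(F) : ∃ δ ∈ D, ∀ i, det (M i) = δ}`.  Let `L` be a field of
characteristic `p` with an embedding `ι : F → L`.  Then every group homomorphism
`χ : H(F) → Lˣ` is a power of the common determinant: there is `k : ℕ` with
`χ M = ι (det (M i₀)) ^ k` for all `M ∈ H(F)`. -/
theorem stmt3 {p : ℕ} (hp : p.Prime) {F : Type*} [Field F] [Fintype F] [CharP F p]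
    (hq : 3 < Fintype.card F)
    {I : Type*} [Fintype I] (i₀ : I) (D : Subgroup Fˣ)
    {L : Type*} [Field L] [CharP L p] (ι : F →+* L)
    (χ : commonDetSubgroup I D →* Lˣ) :
    ∃ k : ℕ, ∀ M : commonDetSubgroup I D,
      (χ M : L) =
        ι ((Matrix.GeneralLinearGroup.det ((M : ∀ _ : I, GL (Fin 2) F) i₀) : Fˣ) : F) ^ k :=
  stmt3_general hp i₀ D ι χ
end

section
/- Let p ≥ 2 be an integer and let h = l·k with l, k positive integers. Let c₀, …, c_{h−1} be natural numbers with c_i ≤ p−1 for all i, not all of them equal to p−1. Set M = Σ_{i=0}^{h−1} c_i p^i and D = Σ_{j=0}^{k−1} p^{j·l}. Then D divides M if and only if c_{(i+l) mod h} = c_i for all i; and when this holds, M = D · (Σ_{i=0}^{l−1} c_i p^i). -/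
/-!
Since `(∑ j < k, p ^ (j * l)) * (p ^ l - 1) = p ^ h - 1`, the hypothesis `D ∣ M` makes `M` a
fixed point of multiplication by `p ^ l` modulo `p ^ h - 1`. As `p ^ h ≡ 1`, multiplying by
`p ^ l` cyclically rotates the base-`p` digits, so the number `N` whose digits are those of `M`
rotated by `l` satisfies `N ≡ M`. Because not all digits equal `p - 1`, both `N` and `M` are
smaller than `p ^ h - 1`; hence `N = M`, and uniqueness of base-`p` digits gives the invariance.
Conversely, an `l`-periodic digit string is `k` copies of its first block of `l` digits.
-/

open Finset

lemma add_mod_injOn_range (l h : ℕ) : Set.InjOn (fun i ↦ (i + l) % h) (range h) := by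
  intro i hi j hj hij
  have hij' : i ≡ j [MOD h] := Nat.ModEq.add_right_cancel' l hij
  rwa [Nat.ModEq, Nat.mod_eq_of_lt (mem_range.1 hi), Nat.mod_eq_of_lt (mem_range.1 hj)] at hij'

lemma image_add_mod_range (l h : ℕ) : (range h).image (fun i ↦ (i + l) % h) = range h := by
  refine eq_of_subset_of_card_le (fun j hj ↦ ?_) (card_image_of_injOn (add_mod_injOn_range l h)).ge
  obtain ⟨i, hi, rfl⟩ := mem_image.1 hj
  exact mem_range.2 (Nat.mod_lt _ (Nat.zero_lt_of_lt (mem_range.1 hi)))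

lemma sum_range_add_mod {M : Type*} [AddCommMonoid M] (f : ℕ → M) (l h : ℕ) :
    ∑ i ∈ range h, f ((i + l) % h) = ∑ i ∈ range h, f i := by
  rw [← sum_image (add_mod_injOn_range l h), image_add_mod_range]

section CommSemiring

variable {R : Type*} [CommSemiring R]

lemma sum_rotate_mul_pow {x : R} {h : ℕ} (hx : x ^ h = 1) (a : ℕ → R) (l : ℕ) :
    (∑ i ∈ range h, a ((i + l) % h) * x ^ i) * x ^ l = ∑ i ∈ range h, a i * x ^ i := by
  rw [sum_mul, ← sum_range_add_mod (fun i ↦ a i * x ^ i) l h]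
  refine sum_congr rfl fun i _ ↦ ?_
  rw [mul_assoc, ← pow_add, ← pow_eq_pow_mod _ hx]

lemma sum_range_succ_mul_pow (a : ℕ → R) (x : R) (n : ℕ) :
    ∑ i ∈ range (n + 1), a i * x ^ i = a 0 + x * ∑ i ∈ range n, a (i + 1) * x ^ i := by
  rw [sum_range_succ', mul_sum, add_comm]
  simp only [pow_zero, mul_one, pow_succ]
  congr 1
  exact sum_congr rfl fun i _ ↦ by ring

lemma sum_mul_pow_eq_geom_mul_of_periodic (x : R) (c : ℕ → R) {l : ℕ} :
    ∀ {k : ℕ}, (∀ i, i + l < l * k → c (i + l) = c i) →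
      ∑ i ∈ range (l * k), c i * x ^ i =
        (∑ j ∈ range k, x ^ (j * l)) * ∑ i ∈ range l, c i * x ^ i
  | 0, _ => by simp
  | k + 1, hper => by
    have hshift : ∑ i ∈ range (l * k), c (l + i) * x ^ (l + i) =
        x ^ l * ∑ i ∈ range (l * k), c i * x ^ i := by
      rw [mul_sum]
      refine sum_congr rfl fun i hi ↦ ?_
      have : i + l < l * (k + 1) := by rw [mul_add_one]; have := mem_range.1 hi; omega
      rw [add_comm l i, hper i this, pow_add]
      ring
    have ih := sum_mul_pow_eq_geom_mul_of_periodic x c (k := k) fun i hi ↦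
      hper i (hi.trans_le (Nat.mul_le_mul_left l k.le_succ))
    rw [mul_add_one, add_comm, sum_range_add, hshift, ih, sum_range_succ']
    simp only [add_one_mul, pow_add, ← sum_mul, zero_mul, pow_zero]
    ring

end CommSemiring

lemma sum_mul_pow_lt_pow_sub_one {p h : ℕ} {c : ℕ → ℕ} (hc : ∀ i < h, c i ≤ p - 1)
    (hne : ∃ i < h, c i ≠ p - 1) : ∑ i ∈ range h, c i * p ^ i < p ^ h - 1 := by
  obtain ⟨i₀, hi₀, hci₀⟩ := hne
  have hp : 1 ≤ p := by have := hc i₀ hi₀; omega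
  calc ∑ i ∈ range h, c i * p ^ i < ∑ i ∈ range h, (p - 1) * p ^ i := by
        refine sum_lt_sum (fun i hi ↦ Nat.mul_le_mul_right _ (hc i (mem_range.1 hi)))
          ⟨i₀, mem_range.2 hi₀, Nat.mul_lt_mul_of_pos_right ?_ (Nat.pow_pos hp)⟩
        exact lt_of_le_of_ne (hc i₀ hi₀) hci₀
    _ = p ^ h - 1 := by rw [← mul_sum, mul_comm, geom_sum_mul_of_one_le hp]

lemma eq_of_sum_mul_pow_eq {p : ℕ} :
    ∀ {h : ℕ} {a b : ℕ → ℕ}, (∀ i < h, a i < p) → (∀ i < h, b i < p) →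
      ∑ i ∈ range h, a i * p ^ i = ∑ i ∈ range h, b i * p ^ i → ∀ i < h, a i = b i
  | 0, _, _, _, _, _ => by simp
  | n + 1, a, b, ha, hb, hab => by
    rw [sum_range_succ_mul_pow, sum_range_succ_mul_pow] at hab
    have ha₀ := ha 0 n.succ_pos
    have hb₀ := hb 0 n.succ_pos
    have hp : 0 < p := Nat.zero_lt_of_lt ha₀
    have h₀ : a 0 = b 0 := by
      simpa [Nat.add_mul_mod_self_left, Nat.mod_eq_of_lt ha₀, Nat.mod_eq_of_lt hb₀]
        using congrArg (· % p) hab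
    have htail := eq_of_sum_mul_pow_eq (h := n) (a := fun i ↦ a (i + 1)) (b := fun i ↦ b (i + 1))
      (fun i hi ↦ ha (i + 1) (by omega)) (fun i hi ↦ hb (i + 1) (by omega))
      (Nat.eq_of_mul_eq_mul_left hp (by rw [h₀] at hab; omega))
    rintro (_ | i) hi
    exacts [h₀, htail i (by omega)]

lemma sum_rotate_modEq_of_dvd {p l k h : ℕ} (hp : 0 < p) (hh₀ : 0 < h) (hh : h = l * k)
    (c : ℕ → ℕ) (hD : (∑ j ∈ range k, p ^ (j * l)) ∣ ∑ i ∈ range h, c i * p ^ i) :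
    ∑ i ∈ range h, c ((i + l) % h) * p ^ i ≡ ∑ i ∈ range h, c i * p ^ i [MOD p ^ h - 1] := by
  rw [← ZMod.natCast_eq_natCast_iff]
  set x : ZMod (p ^ h - 1) := (p : ZMod (p ^ h - 1))
  have hx : x ^ h = 1 := by
    have := ZMod.natCast_self (p ^ h - 1)
    rw [Nat.cast_sub (Nat.one_le_pow _ _ hp), sub_eq_zero] at this
    simpa only [x, Nat.cast_pow, Nat.cast_one] using this
  have hgeom : (∑ j ∈ range k, x ^ (j * l)) * (x ^ l - 1) = 0 := by
    simp_rw [mul_comm _ l, pow_mul, geom_sum_mul, ← pow_mul, ← hh, hx, sub_self]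
  obtain ⟨t, ht⟩ := hD
  have hfix : (∑ i ∈ range h, c i * x ^ i) * x ^ l = ∑ i ∈ range h, c i * x ^ i := by
    have hM := congrArg (Nat.cast : ℕ → ZMod (p ^ h - 1)) ht
    push_cast at hM
    rw [hM]
    linear_combination (t : ZMod (p ^ h - 1)) * hgeom
  have hunit : IsUnit (x ^ l) := (IsUnit.of_pow_eq_one hx hh₀.ne').pow l
  push_cast
  exact hunit.mul_right_cancel ((sum_rotate_mul_pow hx _ l).trans hfix.symm)

theorem stmt5_general (p l k h : ℕ) (hh : h = l * k)
    (c : ℕ → ℕ) (hc : ∀ i < h, c i ≤ p - 1) (hne : ∃ i < h, c i ≠ p - 1) :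
    ((∑ j ∈ Finset.range k, p ^ (j * l)) ∣ (∑ i ∈ Finset.range h, c i * p ^ i) ↔
      ∀ i < h, c ((i + l) % h) = c i) ∧
    ((∀ i < h, c ((i + l) % h) = c i) →
      (∑ i ∈ Finset.range h, c i * p ^ i) =
        (∑ j ∈ Finset.range k, p ^ (j * l)) * (∑ i ∈ Finset.range l, c i * p ^ i)) := by
  obtain ⟨i₀, hi₀, hci₀⟩ := hne
  have hdigit : ∀ i < h, c i < p := fun i hi ↦ by have := hc i hi; have := hc i₀ hi₀; omega
  have hproduct (hrot : ∀ i < h, c ((i + l) % h) = c i) :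
      ∑ i ∈ range h, c i * p ^ i = (∑ j ∈ range k, p ^ (j * l)) * ∑ i ∈ range l, c i * p ^ i := by
    subst hh
    refine sum_mul_pow_eq_geom_mul_of_periodic _ c fun i hi ↦ ?_
    rw [← hrot i (by omega), Nat.mod_eq_of_lt hi]
  refine ⟨⟨fun hD ↦ ?_, fun hrot ↦ Dvd.intro _ (hproduct hrot).symm⟩, hproduct⟩
  have hmod_lt : ∀ i, (i + l) % h < h := fun i ↦ Nat.mod_lt _ (by omega)
  obtain ⟨j₀, hj₀, hj₀i₀⟩ : ∃ j ∈ range h, (j + l) % h = i₀ := by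
    rw [← mem_image, image_add_mod_range]; exact mem_range.2 hi₀
  have hmodEq := sum_rotate_modEq_of_dvd (Nat.zero_lt_of_lt (hdigit i₀ hi₀)) (by omega) hh c hD
  have hrotated : ∑ i ∈ range h, c ((i + l) % h) * p ^ i = ∑ i ∈ range h, c i * p ^ i :=
    hmodEq.eq_of_lt_of_lt
      (sum_mul_pow_lt_pow_sub_one (fun i _ ↦ hc _ (hmod_lt i)) ⟨j₀, mem_range.1 hj₀, hj₀i₀ ▸ hci₀⟩)
      (sum_mul_pow_lt_pow_sub_one hc ⟨i₀, hi₀, hci₀⟩)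
  exact eq_of_sum_mul_pow_eq (fun i _ ↦ hdigit _ (hmod_lt i)) hdigit hrotated

/-- Let `p ≥ 2`, `h = l * k` with `l, k > 0`, and let `c 0, …, c (h-1)` be natural
numbers `≤ p - 1`, not all equal to `p - 1`.  Set `M = ∑_{i<h} c i * p^i` and
`D = ∑_{j<k} p^(j*l)`.  Then `D ∣ M` iff the digit string is invariant under the
cyclic shift by `l`, i.e. `c ((i + l) % h) = c i` for all `i < h`; and in that case
`M = D * ∑_{i<l} c i * p^i`. -/
theorem stmt5 (p l k h : ℕ) (hp : 2 ≤ p) (hl : 0 < l) (hk : 0 < k) (hh : h = l * k)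
    (c : ℕ → ℕ) (hc : ∀ i < h, c i ≤ p - 1) (hne : ∃ i < h, c i ≠ p - 1) :
    ((∑ j ∈ Finset.range k, p ^ (j * l)) ∣ (∑ i ∈ Finset.range h, c i * p ^ i) ↔
      ∀ i < h, c ((i + l) % h) = c i) ∧
    ((∀ i < h, c ((i + l) % h) = c i) →
      (∑ i ∈ Finset.range h, c i * p ^ i) =
        (∑ j ∈ Finset.range k, p ^ (j * l)) * (∑ i ∈ Finset.range l, c i * p ^ i)) :=
  stmt5_general p l k h hh c hc hne
end

section
/- Let d ≥ 1 and W ∈ ℤ, and for each i ∈ {1,…,d} let m_i, n_i be integers with m_i ≥ n_i, m_i < 0 and m_i + n_i = W. Suppose that for each i a pair (ℓ_i, p_i) of integers is chosen from the six-element list [(0, W), (1, n_i − m_i + 1), (2, 2), (2, 2), (3, m_i − n_i + 3), (4, −W + 4)]. If Σ_{i=1}^d ℓ_i ≤ d, then Σ_{i=1}^d p_i < 2d; in particular Σ_{i=1}^d p_i ≠ 2d. -/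
open Finset

/-! The pairs `(ℓ, p)` all lie on or below the line through `(1, 1)` of slope `1 - W ≥ 0`,
i.e. `p - 1 ≤ (1 - W) (ℓ - 1)`. Summing over the places, `∑ ℓ ≤ d` forces `∑ p ≤ d < 2d`. -/

theorem sub_one_le_mul_sub_one_of_mem_kostantPairs {W m n ℓ p : ℤ} (hdom : n ≤ m) (hneg : m < 0)
    (hpur : m + n = W)
    (h : (ℓ, p) ∈
      ([(0, W), (1, n - m + 1), (2, 2), (2, 2), (3, m - n + 3), (4, -W + 4)] : List (ℤ × ℤ))) :
    p - 1 ≤ (1 - W) * (ℓ - 1) := by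
  simp only [List.mem_cons, List.not_mem_nil, or_false, Prod.mk.injEq] at h
  rcases h with ⟨rfl, rfl⟩ | ⟨rfl, rfl⟩ | ⟨rfl, rfl⟩ | ⟨rfl, rfl⟩ | ⟨rfl, rfl⟩ | ⟨rfl, rfl⟩ <;>
    omega

theorem sum_le_card_of_sub_one_le_mul_sub_one {ι : Type*} (s : Finset ι) (ℓ p : ι → ℤ) {c : ℤ}
    (hc : 0 ≤ c) (hp : ∀ i ∈ s, p i - 1 ≤ c * (ℓ i - 1)) (hℓ : ∑ i ∈ s, ℓ i ≤ #s) :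
    ∑ i ∈ s, p i ≤ #s := by
  have hsum : ∑ i ∈ s, (p i - 1) ≤ c * (∑ i ∈ s, ℓ i - #s) :=
    calc ∑ i ∈ s, (p i - 1) ≤ ∑ i ∈ s, c * (ℓ i - 1) := sum_le_sum hp
      _ = c * (∑ i ∈ s, ℓ i - #s) := by simp [← mul_sum, sum_sub_distrib]
  have hneg : c * (∑ i ∈ s, ℓ i - #s) ≤ 0 := mul_nonpos_of_nonneg_of_nonpos hc (by omega)
  simp only [sum_sub_distrib, sum_const, nsmul_eq_mul, mul_one] at hsum
  omega

/-- Let `d ≥ 1`, `W : ℤ`, and for each `i` let `m i ≥ n i`, `m i < 0`, `m i + n i = W`.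
Suppose for each `i` a pair `(ℓ i, P i)` is chosen from the six-element list
`[(0, W), (1, n i - m i + 1), (2, 2), (2, 2), (3, m i - n i + 3), (4, -W + 4)]`.
If `∑ ℓ i ≤ d` then `∑ P i < 2d`; in particular `∑ P i ≠ 2d`. -/
theorem stmt6 (d : ℕ) (hd : 1 ≤ d) (W : ℤ) (m n : Fin d → ℤ)
    (hdom : ∀ i, n i ≤ m i) (hneg : ∀ i, m i < 0) (hpur : ∀ i, m i + n i = W)
    (ℓ P : Fin d → ℤ)
    (hchoice : ∀ i, (ℓ i, P i) ∈
      ([(0, W), (1, n i - m i + 1), (2, 2), (2, 2), (3, m i - n i + 3), (4, -W + 4)] :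
        List (ℤ × ℤ)))
    (hlen : ∑ i, ℓ i ≤ (d : ℤ)) :
    (∑ i, P i < 2 * (d : ℤ)) ∧ (∑ i, P i ≠ 2 * (d : ℤ)) := by
  have hW : 0 ≤ 1 - W := by
    have i₀ : Fin d := ⟨0, hd⟩
    have := hdom i₀; have := hneg i₀; have := hpur i₀
    omega
  have hP : ∑ i, P i ≤ d := by
    simpa using sum_le_card_of_sub_one_le_mul_sub_one univ ℓ P hW
      (fun i _ ↦ sub_one_le_mul_sub_one_of_mem_kostantPairs (hdom i) (hneg i) (hpur i) (hchoice i))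
      (by simpa using hlen)
  have hlt : ∑ i, P i < 2 * (d : ℤ) := by omega
  exact ⟨hlt, hlt.ne⟩
end
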